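/- The closure of Homeo(ω₁) inside Sym(ω₁) (with the topology of pointwise convergence) equals the direct product over countable ordinals β of the full symmetric groups of the Cantor–Bendixson levels Y^(β) = ω₁^(β) \ ω₁^(β+1); in particular each factor is isomorphic to Sym(ℵ₁). -/

import Mathlib

noncomputable section
open Ordinal Set Topology

/-- The first uncountable ordinal `ω₁`, as a type, endowed with the order topology. -/
def Omega1 : Type 1 := Set.Iio (Ordinal.omega 1)

instance : LinearOrder Omega1 := inferInstanceAs (LinearOrder (Set.Iio (Ordinal.omega 1)))
instance : TopologicalSpace Omega1 := Preorder.topology Omega1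
instance : OrderTopology Omega1 := ⟨rfl⟩

/-- The underlying ordinal of a point of `ω₁`. -/
def Omega1.toOrdinal (x : Omega1) : Ordinal := Subtype.val x

theorem Omega1.toOrdinal_lt (x : Omega1) : x.toOrdinal < Ordinal.omega 1 := Subtype.prop x

/-- Build a point of `ω₁` from a countable ordinal. -/
def Omega1.mk (o : Ordinal) (h : o < Ordinal.omega 1) : Omega1 := Subtype.mk o h

/-- The group structure on the self-homeomorphism group of a topological space. -/
instance {X : Type*} [TopologicalSpace X] : Group (X ≃ₜ X) where
  mul g h := h.trans g
  one := Homeomorph.refl X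
  inv := Homeomorph.symm
  mul_assoc _ _ _ := Homeomorph.ext fun _ => rfl
  one_mul _ := Homeomorph.ext fun _ => rfl
  mul_one _ := Homeomorph.ext fun _ => rfl
  inv_mul_cancel g := Homeomorph.ext fun x => g.symm_apply_apply x

/-- The topology of pointwise convergence on the homeomorphism group of `ω₁`. -/
instance : TopologicalSpace (Omega1 ≃ₜ Omega1) :=
  TopologicalSpace.induced (fun g : Omega1 ≃ₜ Omega1 => (g : Omega1 → Omega1))
    Pi.topologicalSpace

/-- The set of limit (non-isolated) points of `A`, for the subspace topology on `A`. -/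
def limitPoints {X : Type*} [TopologicalSpace X] (A : Set X) : Set X :=
  {x | x ∈ A ∧ ∀ U : Set X, IsOpen U → x ∈ U → ∃ y, y ∈ U ∩ A ∧ y ≠ x}

/-- The `α`-th Cantor–Bendixson derived subset of a topological space `X`:
`X^(0) = X`, `X^(α+1)` is the set of limit points of `X^(α)`, and
`X^(λ) = ⋂_{β<λ} X^(β)` at limit stages. -/
def CBderiv (X : Type*) [TopologicalSpace X] (α : Ordinal) : Set X :=
  Ordinal.limitRecOn α Set.univ (fun _ ih => limitPoints ih)
    (fun o _ ih => ⋂ (β : Ordinal) (h : β < o), ih β h)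

/-- The topology of pointwise convergence on the symmetric group of the
underlying set of `ω₁` (`ω₁` taken discrete). -/
instance : TopologicalSpace (Equiv.Perm Omega1) :=
  TopologicalSpace.induced (fun σ : Equiv.Perm Omega1 => (σ : Omega1 → Omega1))
    (@Pi.topologicalSpace Omega1 (fun _ => Omega1) (fun _ => ⊥))

/-!
Homeomorphisms preserve every Cantor–Bendixson derivative, hence every level `Y^(β)`, and in the
pointwise topology `σ x ∈ Y^(β)` is a clopen condition on `σ`; so the closure of `Homeo(ω₁)` lies
in the product of the `Sym(Y^(β))`.

Conversely, for `β ≠ 0` the set `ω₁^(β)` consists of the nonzero multiples of `ω^β`, so `Y^(β)`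
consists of the ordinals `ω^β·(γ+1)` (and `0` when `β = 0`). Such a point `a ≠ 0` has arbitrarily
small clopen neighbourhoods `(μ, a]` with `μ + ω^β = a`, and any two of them are order-isomorphic
by a translation. Swapping two disjoint such intervals (or two isolated points) is a homeomorphism
exchanging two given points of the same level and fixing a given finite set, and composing such
swaps matches any level-preserving permutation on any finite set. Finally `γ ↦ ω^β·(γ+1)` embeds
`ω₁` into `Y^(β)`, so each level has size `ℵ₁`.
-/

universe u v

def CBlevel (X : Type*) [TopologicalSpace X] (β : Ordinal) : Set X :=
  CBderiv X β \ CBderiv X (β + 1)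

section CantorBendixson

variable {X Y : Type*} [TopologicalSpace X] [TopologicalSpace Y]

theorem limitPoints_eq_relDerivedSet (A : Set X) : limitPoints A = relDerivedSet A := by
  ext x
  simp only [limitPoints, relDerivedSet_apply, mem_inter_iff, mem_derivedSet, accPt_iff_nhds,
    mem_ofPred_eq]
  rw [and_comm]
  refine and_congr_left fun _ => ⟨fun h U hU => ?_, fun h U hU hxU => h U (hU.mem_nhds hxU)⟩
  obtain ⟨V, hVU, hV, hxV⟩ := mem_nhds_iff.1 hU
  obtain ⟨y, hy, hyx⟩ := h V hV hxV
  exact ⟨y, ⟨hVU hy.1, hy.2⟩, hyx⟩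

theorem Homeomorph.image_derivedSet (g : X ≃ₜ Y) (A : Set X) :
    g '' derivedSet A = derivedSet (g '' A) := by
  refine (g.continuous.image_derivedSet g.injective).antisymm fun y hy => ?_
  have := g.symm.continuous.image_derivedSet g.symm.injective ⟨y, hy, rfl⟩
  rw [← image_comp, g.symm_comp_self, image_id] at this
  exact ⟨_, this, g.apply_symm_apply y⟩

theorem Homeomorph.image_limitPoints (g : X ≃ₜ Y) (A : Set X) :
    g '' limitPoints A = limitPoints (g '' A) := by
  simp only [limitPoints_eq_relDerivedSet, relDerivedSet_apply, image_inter g.injective,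
    g.image_derivedSet]

theorem CBderiv_zero : CBderiv X 0 = Set.univ :=
  limitRecOn_zero _ _ _

theorem CBderiv_add_one (β : Ordinal) : CBderiv X (β + 1) = limitPoints (CBderiv X β) :=
  limitRecOn_add_one _ _ _ _

theorem CBderiv_of_isSuccLimit {o : Ordinal} (ho : Order.IsSuccLimit o) :
    CBderiv X o = ⋂ β < o, CBderiv X β :=
  limitRecOn_limit _ _ _ _ ho

theorem CBderiv_antitone : Antitone (CBderiv X) := by
  intro γ β hγβ
  induction β using Ordinal.limitRecOn generalizing γ with
  | zero => rw [nonpos_iff_eq_zero.1 hγβ]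
  | add_one β ih =>
    rcases hγβ.lt_or_eq with hγβ | rfl
    · rw [CBderiv_add_one]
      exact ((limitPoints_eq_relDerivedSet _).trans_subset relDerivedSet_subset).trans
        (ih (Order.lt_add_one_iff.1 hγβ))
    · rfl
  | limit o ho ih =>
    rcases hγβ.lt_or_eq with hγo | rfl
    · rw [CBderiv_of_isSuccLimit ho]
      exact biInter_subset_of_mem hγo
    · rfl

theorem CBderiv_lift (β : Ordinal.{u}) : CBderiv X (Ordinal.lift.{v} β) = CBderiv X β := by
  induction β using Ordinal.limitRecOn with
  | zero => rw [lift_zero, CBderiv_zero, CBderiv_zero]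
  | add_one β ih => rw [lift_add_one, CBderiv_add_one, CBderiv_add_one, ih]
  | limit o ho ih =>
    rw [CBderiv_of_isSuccLimit ho, CBderiv_of_isSuccLimit (isSuccLimit_lift.2 ho)]
    ext x
    simp only [mem_iInter₂, lt_lift_iff]
    refine ⟨fun h γ hγ => ih γ hγ ▸ h _ ⟨γ, hγ, rfl⟩, ?_⟩
    rintro h _ ⟨γ, hγ, rfl⟩
    exact (ih γ hγ).symm ▸ h γ hγ

theorem CBlevel_lift (β : Ordinal.{u}) : CBlevel X (Ordinal.lift.{v} β) = CBlevel X β := by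
  rw [CBlevel, CBlevel, ← lift_add_one, CBderiv_lift, CBderiv_lift]

theorem Homeomorph.image_CBderiv (g : X ≃ₜ Y) (β : Ordinal) :
    g '' CBderiv X β = CBderiv Y β := by
  induction β using Ordinal.limitRecOn with
  | zero => rw [CBderiv_zero, CBderiv_zero, image_univ, g.range_coe]
  | add_one β ih => rw [CBderiv_add_one, CBderiv_add_one, g.image_limitPoints, ih]
  | limit o ho ih =>
    rw [CBderiv_of_isSuccLimit ho, CBderiv_of_isSuccLimit ho, image_iInter₂ g.bijective]
    exact iInter₂_congr ih

theorem Homeomorph.apply_mem_CBlevel_iff (g : X ≃ₜ Y) {x : X} {β : Ordinal} :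
    g x ∈ CBlevel Y β ↔ x ∈ CBlevel X β := by
  rw [CBlevel, CBlevel, ← g.image_CBderiv, ← g.image_CBderiv, ← image_sdiff g.injective,
    g.injective.mem_set_image]

theorem le_of_mem_CBlevel_of_mem_CBderiv {x : X} {β γ : Ordinal} (hβ : x ∈ CBlevel X β)
    (hγ : x ∈ CBderiv X γ) : γ ≤ β :=
  not_lt.1 fun hβγ => hβ.2 (CBderiv_antitone (Order.add_one_le_of_lt hβγ) hγ)

theorem eq_of_mem_CBlevel {x : X} {β γ : Ordinal} (hβ : x ∈ CBlevel X β) (hγ : x ∈ CBlevel X γ) :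
    β = γ :=
  (le_of_mem_CBlevel_of_mem_CBderiv hγ hβ.1).antisymm (le_of_mem_CBlevel_of_mem_CBderiv hβ hγ.1)

theorem exists_mem_CBlevel_of_notMem {x : X} {α : Ordinal} (hx : x ∉ CBderiv X α) :
    ∃ β < α, x ∈ CBlevel X β := by
  induction α using Ordinal.limitRecOn with
  | zero => simp [CBderiv_zero] at hx
  | add_one α ih =>
    by_cases hα : x ∈ CBderiv X α
    · exact ⟨α, Order.lt_add_one_iff.2 le_rfl, hα, hx⟩
    · obtain ⟨β, hβα, hβ⟩ := ih hα
      exact ⟨β, hβα.trans (Order.lt_add_one_iff.2 le_rfl), hβ⟩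
  | limit o ho ih =>
    rw [CBderiv_of_isSuccLimit ho] at hx
    simp only [mem_iInter₂, not_forall] at hx
    obtain ⟨γ, hγo, hγ⟩ := hx
    obtain ⟨β, hβγ, hβ⟩ := ih γ hγo hγ
    exact ⟨β, hβγ.trans hγo, hβ⟩

theorem isOpen_singleton_of_mem_CBlevel_zero {x : X} (hx : x ∈ CBlevel X 0) : IsOpen {x} := by
  have hx' : x ∉ limitPoints (CBderiv X 0) := by rw [← CBderiv_add_one]; exact hx.2
  simp only [limitPoints, CBderiv_zero, mem_univ, inter_univ, true_and, mem_ofPred_eq, not_forall,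
    not_exists, not_and, not_not] at hx'
  obtain ⟨U, hU, hxU, hUx⟩ := hx'
  convert hU
  exact (eq_singleton_iff_unique_mem.2 ⟨hxU, hUx⟩).symm

theorem exists_homeomorph_swap_of_isClopen {U V : Set X} (hU : IsClopen U) (hV : IsClopen V)
    (hUV : Disjoint U V) (e : U ≃ₜ V) {a b : X} (ha : a ∈ U) (hab : (e ⟨a, ha⟩ : X) = b) :
    ∃ t : X ≃ₜ X, t a = b ∧ t b = a ∧ ∀ x ∉ U ∪ V, t x = x := by
  classical
  let f : X → X := fun x =>
    if hx : x ∈ U then e ⟨x, hx⟩ else if hx' : x ∈ V then e.symm ⟨x, hx'⟩ else x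
  have f_U (x : X) (hx : x ∈ U) : f x = e ⟨x, hx⟩ := dif_pos hx
  have f_V (x : X) (hx : x ∈ V) : f x = e.symm ⟨x, hx⟩ := by
    simp [f, hUV.notMem_of_mem_right hx, hx]
  have f_W : ∀ x ∉ U ∪ V, f x = x := fun x hx => by
    simp only [mem_union, not_or] at hx
    simp [f, hx.1, hx.2]
  have hf : Function.Involutive f := by
    intro x
    by_cases hxU : x ∈ U
    · rw [f_U x hxU, f_V _ (e _).2]
      simp
    by_cases hxV : x ∈ V
    · rw [f_V x hxV, f_U _ (e.symm _).2]
      simp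
    · rw [f_W x (by simp [hxU, hxV]), f_W x (by simp [hxU, hxV])]
  have hcont : Continuous f := by
    have piece {S : Set X} (hS : IsOpen S) {g : S → X} (hg : Continuous g)
        (hfg : ∀ s : S, f s = g s) {x : X} (hx : x ∈ S) : ContinuousAt f x := by
      refine (continuousOn_iff_continuous_domRestrict.2 ?_).continuousAt (hS.mem_nhds hx)
      rwa [show S.domRestrict f = g from funext hfg]
    refine continuous_iff_continuousAt.2 fun x => ?_
    by_cases hxU : x ∈ U
    · exact piece hU.isOpen (g := fun u => e u) (by fun_prop) (fun u => f_U u u.2) hxU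
    by_cases hxV : x ∈ V
    · exact piece hV.isOpen (g := fun v => e.symm v) (by fun_prop) (fun v => f_V v v.2) hxV
    · exact piece (hU.isClosed.union hV.isClosed).isOpen_compl continuous_subtype_val
        (fun s => f_W s s.2) (by simp [hxU, hxV])
  have hfa : f a = b := (f_U a ha).trans hab
  exact ⟨⟨hf.toPerm f, hcont, hcont⟩, hfa, hfa ▸ hf a, f_W⟩

end CantorBendixson

section SuccOrder

variable {α : Type*} [LinearOrder α] [TopologicalSpace α] [OrderTopology α] [SuccOrder α]
  [NoMaxOrder α]

theorem limitPoints_eq_of_succOrder (A : Set α) :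
    limitPoints A = {x ∈ A | ¬ IsMin x ∧ ∀ c < x, (A ∩ Ioo c x).Nonempty} := by
  ext x
  rw [limitPoints_eq_relDerivedSet, relDerivedSet_apply, mem_inter_iff, mem_derivedSet,
    SuccOrder.accPt_principal, and_comm]
  rfl

theorem isClopen_Ioc_of_succOrder (a b : α) : IsClopen (Ioc a b) :=
  ⟨Order.Icc_succ_left a b ▸ isClosed_Icc, Order.Ioo_succ_right a b ▸ isOpen_Ioo⟩

end SuccOrder

namespace Ordinal

theorem opow_dvd_of_isSuccLimit {a o x : Ordinal} (ha : a ≠ 0) (ho : Order.IsSuccLimit o)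
    (h : ∀ β < o, a ^ β ∣ x) : a ^ o ∣ x := by
  obtain ⟨β, hβo, hrβ⟩ := (lt_opow_of_isSuccLimit ha ho).1 (mod_lt x (opow_ne_zero o ha))
  have hβr : a ^ β ∣ x % a ^ o := by
    rw [← dvd_add_iff (dvd_mul_of_dvd_left (opow_dvd_opow a hβo.le) _), div_add_mod]
    exact h β hβo
  rw [dvd_iff_mod_eq_zero]
  by_contra hr
  exact (le_of_dvd hr hβr).not_gt hrβ

theorem mul_omega0_dvd_iff {w x : Ordinal} (hw : w ≠ 0) (hwx : w ∣ x) :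
    w * ω ∣ x ↔ ∀ c < x, ∃ y, w ∣ y ∧ c < y ∧ y < x := by
  obtain ⟨γ, rfl⟩ := hwx
  have hw' {a b : Ordinal} : w * a < w * b ↔ a < b := mul_lt_mul_iff_right₀ (pos_iff_ne_zero.2 hw)
  rw [mul_dvd_mul_iff_left hw, ← isSuccPrelimit_iff_omega0_dvd]
  constructor
  · intro hγ c hc
    exact ⟨w * Order.succ (c / w), dvd_mul_right _ _, lt_mul_succ_div c hw,
      hw'.2 (hγ.succ_lt ((lt_mul_iff_div_lt hw).1 hc))⟩
  · intro h
    by_contra hγ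
    obtain ⟨δ, hδ⟩ := Order.not_isSuccPrelimit_iff.1 hγ
    obtain ⟨_, ⟨k, rfl⟩, hδk, hkγ⟩ := h (w * δ) (hw'.2 hδ.lt)
    exact hδ.2 (hw'.1 hδk) (hw'.1 hkγ)

theorem dvd_and_not_mul_omega0_dvd_iff {w x : Ordinal} (hw : w ≠ 0) :
    (w ∣ x ∧ ¬ w * ω ∣ x) ↔ ∃ γ, x = w * (γ + 1) := by
  constructor
  · rintro ⟨⟨γ, rfl⟩, hγ⟩
    rw [mul_dvd_mul_iff_left hw, ← isSuccPrelimit_iff_omega0_dvd] at hγ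
    obtain ⟨δ, hδ⟩ := Order.not_isSuccPrelimit_iff.1 hγ
    exact ⟨δ, by rw [← hδ.succ_eq, Order.succ_eq_add_one]⟩
  · rintro ⟨γ, rfl⟩
    rw [mul_dvd_mul_iff_left hw, ← isSuccPrelimit_iff_omega0_dvd]
    exact ⟨dvd_mul_right _ _, Order.not_isSuccPrelimit_add_one γ⟩

theorem exists_le_add_opow_eq {β γ c : Ordinal} (hc : c < ω ^ β * (γ + 1)) :
    ∃ μ, c ≤ μ ∧ μ + ω ^ β = ω ^ β * (γ + 1) := by
  set w := ω ^ β
  set μ := max c (w * γ)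
  have hμ : w * γ ≤ μ := le_max_right _ _
  have hμw : w * γ + (μ - w * γ) < w * γ + w := by
    rw [Ordinal.add_sub_cancel_of_le hμ, ← mul_add_one]
    exact max_lt hc
      ((mul_lt_mul_iff_right₀ (opow_pos β omega0_pos)).2 (Order.lt_add_one_iff.2 le_rfl))
  refine ⟨μ, le_max_left _ _, ?_⟩
  calc μ + w = w * γ + (μ - w * γ) + w := by rw [Ordinal.add_sub_cancel_of_le hμ]
    _ = w * (γ + 1) := by
      rw [add_assoc, add_omega0_opow ((add_lt_add_iff_left _).1 hμw), mul_add_one]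

theorem exists_lift_eq_of_lt_omega_one {β : Ordinal.{u}} (hβ : β < ω_ 1) :
    ∃ β₀ : Ordinal.{0}, β₀ < ω_ 1 ∧ lift.{u} β₀ = β :=
  lt_lift_iff.1 (by simpa using hβ)

end Ordinal

namespace Omega1

instance : WellFoundedLT Omega1 := inferInstanceAs (WellFoundedLT (Iio (ω_ 1)))

instance : SuccOrder Omega1 := inferInstanceAs (SuccOrder (Iio (ω_ 1)))

instance : OrderBot Omega1 where
  bot := Omega1.mk 0 (omega_pos 1)
  bot_le x := show (0 : Ordinal) ≤ x.toOrdinal from zero_le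

instance : NoMaxOrder Omega1 where
  exists_gt x :=
    ⟨Omega1.mk (x.toOrdinal + 1) ((Cardinal.isSuccLimit_omega 1).add_one_lt x.toOrdinal_lt),
    show x.toOrdinal < x.toOrdinal + 1 from Order.lt_add_one_iff.2 le_rfl⟩

@[simp] theorem toOrdinal_mk {o : Ordinal} (h : o < ω_ 1) : (Omega1.mk o h).toOrdinal = o := rfl

@[simp] theorem toOrdinal_bot : (⊥ : Omega1).toOrdinal = 0 := rfl

@[simp] theorem toOrdinal_le_toOrdinal {x y : Omega1} : x.toOrdinal ≤ y.toOrdinal ↔ x ≤ y := Iff.rfl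

@[simp] theorem toOrdinal_lt_toOrdinal {x y : Omega1} : x.toOrdinal < y.toOrdinal ↔ x < y := Iff.rfl

theorem toOrdinal_injective : Function.Injective Omega1.toOrdinal := Subtype.val_injective

@[simp] theorem toOrdinal_eq_zero {x : Omega1} : x.toOrdinal = 0 ↔ x = ⊥ :=
  toOrdinal_injective.eq_iff' rfl

-- `⊥` is isolated, so it leaves the derived sets after stage `0`.
def opowMultiples (β : Ordinal) : Set Omega1 := {x | ω ^ β ∣ x.toOrdinal ∧ (β = 0 ∨ x ≠ ⊥)}

theorem limitPoints_opowMultiples (β : Ordinal) :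
    limitPoints (opowMultiples β) = opowMultiples (β + 1) := by
  have hw : ω ^ β ≠ 0 := opow_ne_zero β omega0_ne_zero
  ext x
  simp only [limitPoints_eq_of_succOrder, opowMultiples, isMin_iff_eq_bot, add_eq_zero_iff,
    one_ne_zero, and_false, false_or, mem_ofPred_eq, Set.Nonempty, mem_inter_iff, mem_Ioo,
    opow_add_one]
  constructor
  · rintro ⟨⟨hdvd, -⟩, hx, hacc⟩
    refine ⟨(mul_omega0_dvd_iff hw hdvd).2 fun c hc => ?_, hx⟩
    obtain ⟨y, ⟨hy, -⟩, hcy, hyx⟩ := hacc (Omega1.mk c (hc.trans x.toOrdinal_lt)) hc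
    exact ⟨y.toOrdinal, hy, hcy, hyx⟩
  · rintro ⟨hdvd, hx⟩
    have hβ : ω ^ β ∣ x.toOrdinal := (dvd_mul_right _ _).trans hdvd
    refine ⟨⟨hβ, Or.inr hx⟩, hx, fun c hc => ?_⟩
    obtain ⟨y, hy, hcy, hyx⟩ := (mul_omega0_dvd_iff hw hβ).1 hdvd c.toOrdinal hc
    exact ⟨Omega1.mk y (hyx.trans x.toOrdinal_lt), ⟨hy, Or.inr (ne_bot_of_gt hcy)⟩, hcy, hyx⟩

theorem iInter_opowMultiples {o : Ordinal} (ho : Order.IsSuccLimit o) :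
    ⋂ β < o, opowMultiples β = opowMultiples o := by
  ext x
  simp only [mem_iInter₂, opowMultiples, mem_ofPred_eq]
  constructor
  · intro h
    have hx : x ≠ ⊥ := (h 1 (one_lt_of_isSuccLimit ho)).2.resolve_left one_ne_zero
    exact ⟨opow_dvd_of_isSuccLimit omega0_ne_zero ho fun β hβ => (h β hβ).1, Or.inr hx⟩
  · rintro ⟨hdvd, hx⟩ β hβ
    exact ⟨(opow_dvd_opow ω hβ.le).trans hdvd, Or.inr (hx.resolve_left ho.ne_bot)⟩

theorem CBderiv_eq_opowMultiples (β : Ordinal) : CBderiv Omega1 β = opowMultiples β := by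
  induction β using Ordinal.limitRecOn with
  | zero => ext x; simp [CBderiv_zero, opowMultiples]
  | add_one β ih => rw [CBderiv_add_one, ih, limitPoints_opowMultiples]
  | limit o ho ih =>
    rw [CBderiv_of_isSuccLimit ho, ← iInter_opowMultiples ho]
    exact iInter₂_congr ih

theorem mem_CBlevel_iff {β : Ordinal} {x : Omega1} :
    x ∈ CBlevel Omega1 β ↔ (∃ γ, x.toOrdinal = ω ^ β * (γ + 1)) ∨ (β = 0 ∧ x = ⊥) := by
  have hw : ω ^ β ≠ 0 := opow_ne_zero β omega0_ne_zero
  rw [CBlevel, CBderiv_eq_opowMultiples, CBderiv_eq_opowMultiples]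
  rcases eq_or_ne x ⊥ with rfl | hx
  · simp [opowMultiples, hw, eq_comm (a := (0 : Ordinal))]
  · simp only [mem_sdiff, opowMultiples, mem_ofPred_eq, hx, ne_eq, not_false_eq_true, or_true,
      and_true, and_false, or_false, opow_add_one]
    exact dvd_and_not_mul_omega0_dvd_iff hw

theorem notMem_CBderiv_toOrdinal_add_one (x : Omega1) :
    x ∉ CBderiv Omega1 (x.toOrdinal + 1) := by
  rw [CBderiv_eq_opowMultiples]
  rintro ⟨hdvd, hx⟩
  have hx0 : x.toOrdinal ≠ 0 := by simpa using hx.resolve_left (by simp)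
  exact (right_le_opow _ one_lt_omega0 |>.trans (le_of_dvd hx0 hdvd)).not_gt
    (Order.lt_add_one_iff.2 le_rfl)

theorem exists_mem_CBlevel (x : Omega1) : ∃ β ≤ x.toOrdinal, x ∈ CBlevel Omega1 β := by
  obtain ⟨β, hβ, hx⟩ := exists_mem_CBlevel_of_notMem (notMem_CBderiv_toOrdinal_add_one x)
  exact ⟨β, Order.lt_add_one_iff.1 hβ, hx⟩

theorem lt_omega_one_of_mem_CBlevel {β : Ordinal.{0}} {x : Omega1} (hx : x ∈ CBlevel Omega1 β) :
    β < ω_ 1 := by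
  obtain ⟨γ, hγ, hγx⟩ := exists_mem_CBlevel x
  exact eq_of_mem_CBlevel hx hγx ▸ hγ.trans_lt x.toOrdinal_lt

theorem nonempty_CBlevel_equiv {β : Ordinal.{0}} (hβ : β < ω_ 1) :
    Nonempty (CBlevel Omega1 β ≃ Omega1) := by
  have hw : ω ^ β ≠ 0 := opow_ne_zero β omega0_ne_zero
  have hlt (x : Omega1) : ω ^ β * (x.toOrdinal + 1) < ω_ 1 :=
    isPrincipal_mul_omega 1 (isPrincipal_opow_omega 1 omega0_lt_omega_one hβ)
      (isPrincipal_add_omega 1 x.toOrdinal_lt (one_lt_omega0.trans omega0_lt_omega_one))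
  let f (x : Omega1) : CBlevel Omega1 β :=
    ⟨Omega1.mk _ (hlt x), mem_CBlevel_iff.2 (Or.inl ⟨x.toOrdinal, rfl⟩)⟩
  have hf : Function.Injective f := fun x y hxy => toOrdinal_injective <| by
    simpa [f, hw, Order.add_one_inj] using congrArg (fun z => z.1.toOrdinal) hxy
  exact Function.Embedding.antisymm ⟨Subtype.val, Subtype.val_injective⟩ ⟨f, hf⟩

theorem exists_Ioc_subset_of_mem_nhds {a : Omega1} {β γ : Ordinal}
    (ha : a.toOrdinal = ω ^ β * (γ + 1)) {N : Set Omega1} (hN : N ∈ 𝓝 a) :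
    ∃ m : Omega1, m.toOrdinal + ω ^ β = a.toOrdinal ∧ Ioc m a ⊆ N := by
  have ha0 : ⊥ < a := by
    rw [bot_lt_iff_ne_bot, ne_eq, ← toOrdinal_eq_zero, ha]
    exact mul_ne_zero (opow_ne_zero β omega0_ne_zero) (by simp)
  obtain ⟨c, hca, hcN⟩ := (SuccOrder.hasBasis_nhds_Ioc_of_exists_lt ⟨⊥, ha0⟩).mem_iff.1 hN
  obtain ⟨μ, hcμ, hμ⟩ := exists_le_add_opow_eq (ha ▸ toOrdinal_lt_toOrdinal.2 hca)
  have hμa : μ ≤ a.toOrdinal := ha ▸ hμ ▸ le_self_add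
  exact ⟨Omega1.mk μ (hμa.trans_lt a.toOrdinal_lt), hμ.trans ha.symm,
    (Ioc_subset_Ioc_left (show c ≤ Omega1.mk μ _ from hcμ)).trans hcN⟩

def shift (m n z : Omega1) : Omega1 :=
  Omega1.mk (n.toOrdinal + (z.toOrdinal - m.toOrdinal))
    (isPrincipal_add_omega 1 n.toOrdinal_lt ((sub_le_self _ _).trans_lt z.toOrdinal_lt))

theorem shift_shift {m n z : Omega1} (hz : m ≤ z) : shift n m (shift m n z) = z :=
  toOrdinal_injective <| by simp [shift, Ordinal.add_sub_cancel_of_le (toOrdinal_le_toOrdinal.2 hz)]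

theorem shift_le_shift_iff {m n z₁ z₂ : Omega1} (h₁ : m ≤ z₁) (h₂ : m ≤ z₂) :
    shift m n z₁ ≤ shift m n z₂ ↔ z₁ ≤ z₂ := by
  rw [← toOrdinal_le_toOrdinal, ← toOrdinal_le_toOrdinal, shift, shift, toOrdinal_mk, toOrdinal_mk,
    add_le_add_iff_left, ← add_le_add_iff_left m.toOrdinal,
    Ordinal.add_sub_cancel_of_le (toOrdinal_le_toOrdinal.2 h₁),
    Ordinal.add_sub_cancel_of_le (toOrdinal_le_toOrdinal.2 h₂)]

theorem shift_mem_Ioc {m a n b z : Omega1} {w : Ordinal} (ha : m.toOrdinal + w = a.toOrdinal)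
    (hb : n.toOrdinal + w = b.toOrdinal) (hz : z ∈ Ioc m a) : shift m n z ∈ Ioc n b := by
  obtain ⟨hmz, hza⟩ := hz
  rw [← toOrdinal_le_toOrdinal, ← ha, ← Ordinal.sub_le] at hza
  constructor
  · rw [← toOrdinal_lt_toOrdinal, shift, toOrdinal_mk]
    exact lt_add_of_pos_right _ (pos_iff_ne_zero.2 (Ordinal.sub_ne_zero_iff_lt.2 hmz))
  · rw [← toOrdinal_le_toOrdinal, shift, toOrdinal_mk, ← hb]
    exact add_le_add_right hza _

def shiftIoc {m a n b : Omega1} {w : Ordinal} (ha : m.toOrdinal + w = a.toOrdinal)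
    (hb : n.toOrdinal + w = b.toOrdinal) : Ioc m a ≃o Ioc n b where
  toFun z := ⟨shift m n z, shift_mem_Ioc ha hb z.2⟩
  invFun z := ⟨shift n m z, shift_mem_Ioc hb ha z.2⟩
  left_inv z := Subtype.ext (shift_shift z.2.1.le)
  right_inv z := Subtype.ext (shift_shift z.2.1.le)
  map_rel_iff' {z₁ z₂} := shift_le_shift_iff z₁.2.1.le z₂.2.1.le

theorem exists_isClopen_homeomorph {a b : Omega1} {β : Ordinal.{0}}
    (ha : a ∈ CBlevel Omega1 β) (hb : b ∈ CBlevel Omega1 β) {N M : Set Omega1}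
    (hN : N ∈ 𝓝 a) (hM : M ∈ 𝓝 b) :
    ∃ U V : Set Omega1, IsClopen U ∧ IsClopen V ∧ U ⊆ N ∧ V ⊆ M ∧
      ∃ (haU : a ∈ U) (e : U ≃ₜ V), (e ⟨a, haU⟩ : Omega1) = b := by
  rcases eq_or_ne β 0 with rfl | hβ
  · refine ⟨{a}, {b}, ⟨isClosed_singleton, isOpen_singleton_of_mem_CBlevel_zero ha⟩,
      ⟨isClosed_singleton, isOpen_singleton_of_mem_CBlevel_zero hb⟩,
      singleton_subset_iff.2 (mem_of_mem_nhds hN), singleton_subset_iff.2 (mem_of_mem_nhds hM),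
      rfl, Homeomorph.homeomorphOfUnique _ _, rfl⟩
  obtain ⟨γ, hγ⟩ := (mem_CBlevel_iff.1 ha).resolve_right fun h => hβ h.1
  obtain ⟨δ, hδ⟩ := (mem_CBlevel_iff.1 hb).resolve_right fun h => hβ h.1
  obtain ⟨m, hm, hmN⟩ := exists_Ioc_subset_of_mem_nhds hγ hN
  obtain ⟨n, hn, hnM⟩ := exists_Ioc_subset_of_mem_nhds hδ hM
  have hma : m < a := by
    rw [← toOrdinal_lt_toOrdinal, ← hm]
    exact lt_add_of_pos_right _ (opow_pos β omega0_pos)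
  refine ⟨_, _, isClopen_Ioc_of_succOrder m a, isClopen_Ioc_of_succOrder n b, hmN, hnM,
    right_mem_Ioc.2 hma, (shiftIoc hm hn).toHomeomorph, toOrdinal_injective ?_⟩
  simp [shiftIoc, shift, ← hm, ← hn]

theorem exists_homeomorph_swap {a b : Omega1} {β : Ordinal.{0}} (ha : a ∈ CBlevel Omega1 β)
    (hb : b ∈ CBlevel Omega1 β) (hab : a ≠ b) {T : Set Omega1} (hT : IsClosed T) (haT : a ∉ T)
    (hbT : b ∉ T) : ∃ t : Omega1 ≃ₜ Omega1, t a = b ∧ t b = a ∧ ∀ z ∈ T, t z = z := by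
  obtain ⟨u, v, hu, hv, hau, hbv, huv⟩ := t2_separation hab
  obtain ⟨U, V, hU, hV, hUN, hVM, haU, e, he⟩ := exists_isClopen_homeomorph ha hb
    ((hu.inter hT.isOpen_compl).mem_nhds ⟨hau, haT⟩)
    ((hv.inter hT.isOpen_compl).mem_nhds ⟨hbv, hbT⟩)
  obtain ⟨t, hta, htb, ht⟩ := exists_homeomorph_swap_of_isClopen hU hV
    (huv.mono (hUN.trans inter_subset_left) (hVM.trans inter_subset_left)) e haU he
  refine ⟨t, hta, htb, fun z hz => ht z ?_⟩
  rintro (hzU | hzV)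
  exacts [(hUN hzU).2 hz, (hVM hzV).2 hz]

theorem exists_homeomorph_eqOn_finset {σ : Equiv.Perm Omega1}
    (hσ : ∀ x (β : Ordinal.{0}), x ∈ CBlevel Omega1 β → σ x ∈ CBlevel Omega1 β)
    (F : Finset Omega1) : ∃ g : Omega1 ≃ₜ Omega1, ∀ x ∈ F, g x = σ x := by
  classical
  induction F using Finset.induction_on with
  | empty => exact ⟨Homeomorph.refl _, by simp⟩
  | insert x F hxF ih =>
    obtain ⟨g, hg⟩ := ih
    simp only [Finset.forall_mem_insert]
    by_cases hgx : g x = σ x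
    · exact ⟨g, hgx, hg⟩
    obtain ⟨β, -, hβ⟩ := exists_mem_CBlevel x
    have hgT : g x ∉ σ '' F := by
      rintro ⟨y, hyF, hy⟩
      rw [← hg y hyF, g.injective.eq_iff] at hy
      exact hxF (hy ▸ hyF)
    have hσT : σ x ∉ σ '' F := fun h => hxF (σ.injective.mem_set_image.1 h)
    obtain ⟨t, hta, -, ht⟩ := exists_homeomorph_swap (g.apply_mem_CBlevel_iff.2 hβ) (hσ x β hβ)
      hgx (F.finite_toSet.image σ).isClosed hgT hσT
    exact ⟨g.trans t, hta, fun y hy => (congrArg t (hg y hy)).trans (ht _ (mem_image_of_mem σ hy))⟩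

theorem mem_closure_perm_iff {S : Set (Equiv.Perm Omega1)} {σ : Equiv.Perm Omega1} :
    σ ∈ closure S ↔ ∀ F : Finset Omega1, ∃ τ ∈ S, ∀ x ∈ F, τ x = σ x := by
  have hnhds : 𝓝 σ = Filter.comap (fun τ : Equiv.Perm Omega1 => (τ : Omega1 → Omega1))
      (Filter.pi fun x => pure (σ x)) := by
    rw [@nhds_induced _ _ (@Pi.topologicalSpace Omega1 (fun _ => Omega1) (fun _ => ⊥)),
      @nhds_pi Omega1 (fun _ => Omega1) (fun _ => ⊥),
      @nhds_discrete Omega1 ⊥ (discreteTopology_bot _)]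
  rw [mem_closure_iff_nhds_basis
    (hnhds ▸ (Filter.hasBasis_pi fun x => Filter.hasBasis_pure (σ x)).comap _)]
  simp only [forall_const, implies_true, and_true, mem_preimage, mem_pi, mem_singleton_iff,
    Prod.forall]
  exact ⟨fun h F => h F F.finite_toSet, fun h F hF => by simpa using h hF.toFinset⟩

theorem apply_mem_CBlevel_iff_of_mem_closure {σ : Equiv.Perm Omega1}
    (hσ : σ ∈ closure (range fun g : Omega1 ≃ₜ Omega1 => g.toEquiv)) (x : Omega1)
    (β : Ordinal.{u}) : σ x ∈ CBlevel Omega1 β ↔ x ∈ CBlevel Omega1 β := by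
  obtain ⟨_, ⟨g, rfl⟩, hg⟩ := mem_closure_perm_iff.1 hσ {x}
  rw [← hg x (Finset.mem_singleton_self x)]
  exact g.apply_mem_CBlevel_iff

theorem mem_closure_of_forall_mem_CBlevel {σ : Equiv.Perm Omega1}
    (hσ : ∀ x (β : Ordinal.{0}), x ∈ CBlevel Omega1 β → σ x ∈ CBlevel Omega1 β) :
    σ ∈ closure (range fun g : Omega1 ≃ₜ Omega1 => g.toEquiv) :=
  mem_closure_perm_iff.2 fun F =>
    let ⟨g, hg⟩ := exists_homeomorph_eqOn_finset hσ F
    ⟨g.toEquiv, ⟨g, rfl⟩, hg⟩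

end Omega1

/-- The closure of `Homeo(ω₁)` in `Sym(ω₁)` is exactly the set of permutations
preserving every Cantor–Bendixson level `Y^(β) = ω₁^(β) \ ω₁^(β+1)`, i.e. the
direct product of the full symmetric groups of the levels; moreover each
factor is isomorphic to `Sym(ℵ₁)`. -/
theorem closure_homeoOmega1_in_sym :
    closure (Set.range fun g : Omega1 ≃ₜ Omega1 => g.toEquiv) =
      {σ : Equiv.Perm Omega1 | ∀ β : Ordinal, β < Ordinal.omega 1 →
        (fun x => σ x) '' (CBderiv Omega1 β \ CBderiv Omega1 (β + 1)) =
          CBderiv Omega1 β \ CBderiv Omega1 (β + 1)} ∧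
    ∀ β : Ordinal, β < Ordinal.omega 1 →
      Nonempty (Equiv.Perm ↥(CBderiv Omega1 β \ CBderiv Omega1 (β + 1)) ≃*
        Equiv.Perm Omega1) := by
  refine ⟨Set.ext fun σ => ⟨fun hσ β _ => ?_, fun hσ => ?_⟩, fun β hβ => ?_⟩
  · rw [← CBlevel]
    exact ((σ.preimage_eq_iff_eq_image _ _).1
      (Set.ext (Omega1.apply_mem_CBlevel_iff_of_mem_closure hσ · β))).symm
  · refine Omega1.mem_closure_of_forall_mem_CBlevel fun x β hx => ?_
    have hβ := hσ _ (lift_lt_omega_one.2 (Omega1.lt_omega_one_of_mem_CBlevel hx))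
    rw [← CBlevel, CBlevel_lift] at hβ
    exact hβ ▸ mem_image_of_mem _ hx
  · obtain ⟨β₀, hβ₀, rfl⟩ := exists_lift_eq_of_lt_omega_one hβ
    rw [← CBlevel, CBlevel_lift]
    obtain ⟨e⟩ := Omega1.nonempty_CBlevel_equiv hβ₀
    exact ⟨e.permCongrHom⟩
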